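/- Let n₁, n₂ ≥ 1 and suppose s₁ > n₁/2, s₂ ≥ 0, and s₁ + s₂ > (n₁+n₂)/2. Then there exists a constant C > 0 such that for every Schwartz function f on ℝ^{n₁}×ℝ^{n₂}: ‖f‖_{L^∞} ≤ C ‖⟨ξ⟩^{s₁} ⟨ξ^{(2)}⟩^{s₂} 𝓕f‖_{L^2}. (Anisotropic Sobolev embedding H^{(s₁,s₂),2}(ℝ^{n₁}×ℝ^{n₂}) ⊆ L^∞(ℝ^{n₁}×ℝ^{n₂}).) -/

import Mathlib

open MeasureTheory Complex Filter
open scoped ENNReal BigOperators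

noncomputable section

abbrev Euc (n : ℕ) : Type := EuclideanSpace ℝ (Fin n)

/-- Fourier transform `𝓕f(ξ) = ∫ e^{i ξ·x} f(x) dx` on `ℝ^{a} × ℝ^{b}`. -/
def FT2 {a b : ℕ} (f : Euc a × Euc b → ℂ) (ξ : Euc a × Euc b) : ℂ :=
  ∫ x : Euc a × Euc b,
    Complex.exp (Complex.I * ((inner ℝ ξ.1 x.1 + inner ℝ ξ.2 x.2 : ℝ) : ℂ)) * f x

/-- Inverse Fourier transform on `ℝ^{a} × ℝ^{b}`. -/
def IFT2 {a b : ℕ} (g : Euc a × Euc b → ℂ) (x : Euc a × Euc b) : ℂ :=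
  (((2 * Real.pi) ^ (a + b) : ℝ) : ℂ)⁻¹ *
    ∫ ξ : Euc a × Euc b,
      Complex.exp (-(Complex.I * ((inner ℝ ξ.1 x.1 + inner ℝ ξ.2 x.2 : ℝ) : ℂ))) * g ξ

/-- The full Japanese bracket weight `⟨ξ⟩^s = (1+|ξ|²)^{s/2}` on `ℝ^a × ℝ^b`. -/
def wFull {a b : ℕ} (s : ℝ) (ξ : Euc a × Euc b) : ℝ := (1 + ‖ξ.1‖ ^ 2 + ‖ξ.2‖ ^ 2) ^ (s / 2)

/-- The weight `⟨ξ⁽¹⁾⟩^s`. -/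
def w1 {a b : ℕ} (s : ℝ) (ξ : Euc a × Euc b) : ℝ := (1 + ‖ξ.1‖ ^ 2) ^ (s / 2)

/-- The weight `⟨ξ⁽²⁾⟩^s`. -/
def w2 {a b : ℕ} (s : ℝ) (ξ : Euc a × Euc b) : ℝ := (1 + ‖ξ.2‖ ^ 2) ^ (s / 2)

/-- The Fourier multiplier operator with symbol `w`: `f ↦ 𝓕^{-1}(w ⬝ 𝓕 f)`.
In particular `weightOp (w2 s) = J_{(2)}^s`, `weightOp (wFull s) = J^s`,
`weightOp (w1 s) = J_{(1)}^s`. -/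
def weightOp {a b : ℕ} (w : Euc a × Euc b → ℝ) (f : Euc a × Euc b → ℂ) :
    Euc a × Euc b → ℂ :=
  IFT2 (fun ξ => (w ξ : ℂ) * FT2 f ξ)

/-- The anisotropic Bessel potential norm `‖f‖_{H^{(s₁,s₂),p}} = ‖J^{s₁} J_{(2)}^{s₂} f‖_{L^p}`. -/
def anisoNormP {a b : ℕ} (s₁ s₂ p : ℝ) (f : Euc a × Euc b → ℂ) : ℝ≥0∞ :=
  eLpNorm (weightOp (fun ξ => wFull s₁ ξ * w2 s₂ ξ) f) (ENNReal.ofReal p) volume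

/-- The Fourier-side anisotropic `H^{(s₁,s₂),2}` norm `‖⟨ξ⟩^{s₁}⟨ξ⁽²⁾⟩^{s₂} 𝓕f‖_{L²}`
(equal to the `H^{(s₁,s₂),2}` norm up to the Plancherel constant). -/
def fnorm2 {a b : ℕ} (s₁ s₂ : ℝ) (f : Euc a × Euc b → ℂ) : ℝ≥0∞ :=
  eLpNorm (fun ξ => ((wFull s₁ ξ * w2 s₂ ξ : ℝ) : ℂ) * FT2 f ξ) 2 volume


/-! ### Auxiliary machinery for the proof -/

open scoped FourierTransform

namespace AnisoAux

/-- The product space with its `L²` (hilbertian) structure. -/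
abbrev VV (a b : ℕ) : Type := WithLp 2 (Euc a × Euc b)

instance {a b : ℕ} : MeasurableSpace (VV a b) :=
  inferInstance
instance {a b : ℕ} : BorelSpace (VV a b) :=
  inferInstance
instance {a b : ℕ} : SecondCountableTopology (VV a b) :=
  inferInstance
instance {a b : ℕ} : SigmaCompactSpace (VV a b) :=
  inferInstance

lemma volume_VV (a b : ℕ) :
    MeasurePreserving (MeasurableEquiv.toLp 2 (Euc a × Euc b)).symm
      (volume : Measure (VV a b)) (volume : Measure (Euc a × Euc b)) :=
  WithLp.volume_preserving_symm_measurableEquiv_toLp_prod _ _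

lemma FT2_eq {a b : ℕ} (f : Euc a × Euc b → ℂ) (ξ : VV a b) :
    FT2 f (WithLp.ofLp ξ)
      = 𝓕 (fun v : VV a b => f (WithLp.ofLp v)) ((-(2 * Real.pi)⁻¹ : ℝ) • ξ) := by
  rw [Real.fourier_eq', FT2, ← (volume_VV a b).integral_comp']
  refine integral_congr_ae (Filter.Eventually.of_forall (fun (v : VV a b) => ?_))
  set w : VV a b := (-(2 * Real.pi)⁻¹ : ℝ) • ξ with hw
  have h1 : (inner ℝ v w : ℝ) = (-(2 * Real.pi)⁻¹ : ℝ) * (inner ℝ v ξ : ℝ) := by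
    rw [hw]; exact real_inner_smul_right _ _ _
  have h2 : (inner ℝ v ξ : ℝ) = inner ℝ (WithLp.ofLp ξ).1 (WithLp.ofLp v).1
      + inner ℝ (WithLp.ofLp ξ).2 (WithLp.ofLp v).2 := by
    rw [WithLp.prod_inner_apply, real_inner_comm (WithLp.ofLp v).1,
      real_inner_comm (WithLp.ofLp v).2]
  have hπ : (2 * Real.pi) ≠ 0 := by positivity
  have h3 : (-2 * Real.pi * (inner ℝ v w : ℝ) : ℝ)
      = (inner ℝ (WithLp.ofLp ξ).1 (WithLp.ofLp v).1
        + inner ℝ (WithLp.ofLp ξ).2 (WithLp.ofLp v).2 : ℝ) := by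
    rw [h1, h2]; field_simp
  show Complex.exp (Complex.I * ((inner ℝ (WithLp.ofLp ξ).1 (WithLp.ofLp v).1
        + inner ℝ (WithLp.ofLp ξ).2 (WithLp.ofLp v).2 : ℝ) : ℂ)) * f (WithLp.ofLp v)
      = Complex.exp (((-2 * Real.pi * (inner ℝ v w : ℝ) : ℝ) : ℂ) * Complex.I) • f (WithLp.ofLp v)
  rw [h3, smul_eq_mul, mul_comm Complex.I]

/-- Transfer of a Schwartz function to the `L²` product space. -/
def toV {a b : ℕ} (f : SchwartzMap (Euc a × Euc b) ℂ) : SchwartzMap (VV a b) ℂ :=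
  SchwartzMap.compCLMOfContinuousLinearEquiv ℝ
    (WithLp.prodContinuousLinearEquiv 2 ℝ (Euc a) (Euc b)) f

lemma toV_coe {a b : ℕ} (f : SchwartzMap (Euc a × Euc b) ℂ) :
    ⇑(toV f) = fun v : VV a b => f (WithLp.ofLp v) := rfl

lemma FT2_eq_toV {a b : ℕ} (f : SchwartzMap (Euc a × Euc b) ℂ) (ξ : VV a b) :
    FT2 (⇑f) (WithLp.ofLp ξ) = 𝓕 (⇑(toV f)) ((-(2 * Real.pi)⁻¹ : ℝ) • ξ) :=
  FT2_eq (⇑f) ξ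

lemma fourier_toV_eq {a b : ℕ} (f : SchwartzMap (Euc a × Euc b) ℂ) (v : VV a b) :
    𝓕 (⇑(toV f)) v = FT2 (⇑f) (WithLp.ofLp ((-(2 * Real.pi) : ℝ) • v)) := by
  rw [FT2_eq_toV f (((-(2 * Real.pi) : ℝ)) • v), smul_smul,
    show (-(2 * Real.pi)⁻¹ * -(2 * Real.pi) : ℝ) = 1 by
      field_simp]
  rw [one_smul]

lemma integrable_fourier_toV {a b : ℕ} (f : SchwartzMap (Euc a × Euc b) ℂ) :
    Integrable (𝓕 (⇑(toV f))) volume := by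
  have := (SchwartzMap.fourierTransformCLM ℝ (toV f)).integrable (μ := volume)
  rwa [SchwartzMap.fourierTransformCLM_apply, SchwartzMap.fourier_coe] at this

lemma continuous_fourier_toV {a b : ℕ} (f : SchwartzMap (Euc a × Euc b) ℂ) :
    Continuous (𝓕 (⇑(toV f))) := by
  have := (SchwartzMap.fourierTransformCLM ℝ (toV f)).continuous
  rwa [SchwartzMap.fourierTransformCLM_apply, SchwartzMap.fourier_coe] at this

lemma continuous_FT2 {a b : ℕ} (f : SchwartzMap (Euc a × Euc b) ℂ) :
    Continuous (fun ξ : VV a b => FT2 (⇑f) (WithLp.ofLp ξ)) := by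
  have : (fun ξ : VV a b => FT2 (⇑f) (WithLp.ofLp ξ))
      = fun ξ : VV a b => 𝓕 (⇑(toV f)) ((-(2 * Real.pi)⁻¹ : ℝ) • ξ) := by
    funext ξ; exact FT2_eq_toV f ξ
  rw [this]
  exact (continuous_fourier_toV f).comp (continuous_const_smul _)

/-- Pointwise bound via Fourier inversion. -/
lemma enorm_le_lintegral {a b : ℕ} (f : SchwartzMap (Euc a × Euc b) ℂ) (x : Euc a × Euc b) :
    (‖f x‖₊ : ℝ≥0∞) ≤ ∫⁻ v : VV a b, (‖𝓕 (⇑(toV f)) v‖₊ : ℝ≥0∞) := by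
  have hinv : 𝓕⁻ (𝓕 (⇑(toV f))) (WithLp.toLp 2 x) = toV f (WithLp.toLp 2 x) :=
    MeasureTheory.Integrable.fourierInv_fourier_eq ((toV f).integrable)
      (integrable_fourier_toV f) ((toV f).continuous.continuousAt)
  have h1 : ‖f x‖ ≤ ∫ v : VV a b, ‖𝓕 (⇑(toV f)) v‖ := by
    have : ‖f x‖ = ‖𝓕⁻ (𝓕 (⇑(toV f))) (WithLp.toLp 2 x)‖ := by rw [hinv]; rfl
    rw [this]
    exact VectorFourier.norm_fourierIntegral_le_integral_norm _ _ _ _ _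
  calc (‖f x‖₊ : ℝ≥0∞) = ENNReal.ofReal ‖f x‖ := (ofReal_norm_eq_enorm _).symm
    _ ≤ ENNReal.ofReal (∫ v : VV a b, ‖𝓕 (⇑(toV f)) v‖) := ENNReal.ofReal_le_ofReal h1
    _ = ∫⁻ v : VV a b, (‖𝓕 (⇑(toV f)) v‖₊ : ℝ≥0∞) :=
        ofReal_integral_norm_eq_lintegral_enorm (integrable_fourier_toV f)

/-- Change of variables in the `lintegral`. -/
lemma lintegral_fourier_toV_eq {a b : ℕ} (f : SchwartzMap (Euc a × Euc b) ℂ) :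
    ∫⁻ v : VV a b, (‖𝓕 (⇑(toV f)) v‖₊ : ℝ≥0∞)
      = ENNReal.ofReal |(((-(2 * Real.pi)) ^ (Module.finrank ℝ (VV a b)))⁻¹ : ℝ)| *
        ∫⁻ ξ : VV a b, (‖FT2 (⇑f) (WithLp.ofLp ξ)‖₊ : ℝ≥0∞) := by
  have h2π : (-(2 * Real.pi) : ℝ) ≠ 0 := by
    simp [Real.pi_ne_zero]
  have hmeas : Measurable (fun ξ : VV a b => (‖FT2 (⇑f) (WithLp.ofLp ξ)‖₊ : ℝ≥0∞)) :=
    (continuous_FT2 f).measurable.nnnorm.coe_nnreal_ennreal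
  calc ∫⁻ v : VV a b, (‖𝓕 (⇑(toV f)) v‖₊ : ℝ≥0∞)
      = ∫⁻ v : VV a b, (‖FT2 (⇑f) (WithLp.ofLp ((-(2 * Real.pi) : ℝ) • v))‖₊ : ℝ≥0∞) := by
        simp_rw [fourier_toV_eq]
    _ = ∫⁻ ξ : VV a b, (‖FT2 (⇑f) (WithLp.ofLp ξ)‖₊ : ℝ≥0∞)
          ∂(Measure.map (fun v : VV a b => (-(2 * Real.pi) : ℝ) • v) volume) := by
        rw [lintegral_map hmeas (measurable_const_smul _)]
    _ = ENNReal.ofReal |(((-(2 * Real.pi)) ^ (Module.finrank ℝ (VV a b)))⁻¹ : ℝ)| *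
          ∫⁻ ξ : VV a b, (‖FT2 (⇑f) (WithLp.ofLp ξ)‖₊ : ℝ≥0∞) := by
        rw [Measure.map_addHaar_smul (volume : Measure (VV a b)) h2π, lintegral_smul_measure, smul_eq_mul]

lemma wFull_pos {a b : ℕ} (s : ℝ) (ξ : Euc a × Euc b) : 0 < wFull s ξ := by
  have h : (0:ℝ) < 1 + ‖ξ.1‖^2 + ‖ξ.2‖^2 := by positivity
  exact Real.rpow_pos_of_pos h _

lemma w2_pos {a b : ℕ} (s : ℝ) (ξ : Euc a × Euc b) : 0 < w2 s ξ := by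
  have h : (0:ℝ) < 1 + ‖ξ.2‖^2 := by positivity
  exact Real.rpow_pos_of_pos h _

lemma weight_lower {a b : ℕ} {θ s₁ s₂ : ℝ} (hθ0 : 0 ≤ θ) (hθ1 : θ ≤ 1) (hs₁ : 0 ≤ s₁)
    (hs₂ : 0 ≤ s₂) (ξ : Euc a × Euc b) :
    (1 + ‖ξ.1‖^2) ^ (θ*s₁/2) * (1 + ‖ξ.2‖^2) ^ (((1-θ)*s₁+s₂)/2)
      ≤ wFull s₁ ξ * w2 s₂ ξ := by
  have hA0 : (0:ℝ) ≤ ‖ξ.1‖^2 := by positivity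
  have hB0 : (0:ℝ) ≤ ‖ξ.2‖^2 := by positivity
  set A := ‖ξ.1‖^2 with hA
  set B := ‖ξ.2‖^2 with hB
  have h1pA : (0:ℝ) < 1 + A := by linarith
  have h1pB : (0:ℝ) < 1 + B := by linarith
  have h1pAB : (0:ℝ) < 1 + A + B := by linarith
  have key : (1+A)^θ * (1+B)^(1-θ) ≤ 1 + A + B := by
    have k1 : (1+A)^θ ≤ (1+A+B)^θ := Real.rpow_le_rpow h1pA.le (by linarith) hθ0
    have k2 : (1+B)^(1-θ) ≤ (1+A+B)^(1-θ) :=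
      Real.rpow_le_rpow h1pB.le (by linarith) (by linarith)
    calc (1+A)^θ * (1+B)^(1-θ) ≤ (1+A+B)^θ * (1+A+B)^(1-θ) := by
          apply mul_le_mul k1 k2 (Real.rpow_nonneg h1pB.le _) (Real.rpow_nonneg (by linarith) _)
      _ = (1+A+B)^(θ+(1-θ)) := (Real.rpow_add h1pAB _ _).symm
      _ = 1+A+B := by norm_num
  have h2 : ((1+A)^θ * (1+B)^(1-θ))^(s₁/2) ≤ (1+A+B)^(s₁/2) :=
    Real.rpow_le_rpow (by positivity) key (by positivity)
  have h3 : ((1+A)^θ * (1+B)^(1-θ))^(s₁/2) = (1+A)^(θ*s₁/2) * (1+B)^((1-θ)*s₁/2) := by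
    rw [Real.mul_rpow (Real.rpow_nonneg h1pA.le _) (Real.rpow_nonneg h1pB.le _),
      ← Real.rpow_mul h1pA.le, ← Real.rpow_mul h1pB.le]
    ring_nf
  have hw : wFull s₁ ξ = (1+A+B)^(s₁/2) := rfl
  have hw2 : w2 s₂ ξ = (1+B)^(s₂/2) := rfl
  rw [hw, hw2]
  calc (1+A)^(θ*s₁/2) * (1+B)^(((1-θ)*s₁+s₂)/2)
      = ((1+A)^(θ*s₁/2) * (1+B)^((1-θ)*s₁/2)) * (1+B)^(s₂/2) := by
        rw [mul_assoc, ← Real.rpow_add h1pB]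
        ring_nf
    _ ≤ (1+A+B)^(s₁/2) * (1+B)^(s₂/2) := by
        refine mul_le_mul_of_nonneg_right ?_ (Real.rpow_nonneg h1pB.le _)
        rw [← h3]; exact h2

lemma weightK_le {a b : ℕ} {θ s₁ s₂ : ℝ} (hθ0 : 0 ≤ θ) (hθ1 : θ ≤ 1) (hs₁ : 0 ≤ s₁)
    (hs₂ : 0 ≤ s₂) (ξ : Euc a × Euc b) :
    (ENNReal.ofReal (wFull s₁ ξ * w2 s₂ ξ))⁻¹ ^ (2:ℝ)
      ≤ ENNReal.ofReal ((1+‖ξ.1‖^2)^(-(2*(θ*s₁))/2) * (1+‖ξ.2‖^2)^(-(2*((1-θ)*s₁+s₂))/2)) := by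
  have hA0 : (0:ℝ) ≤ ‖ξ.1‖^2 := by positivity
  have hB0 : (0:ℝ) ≤ ‖ξ.2‖^2 := by positivity
  have h1pA : (0:ℝ) < 1 + ‖ξ.1‖^2 := by linarith
  have h1pB : (0:ℝ) < 1 + ‖ξ.2‖^2 := by linarith
  have hw : 0 < wFull s₁ ξ * w2 s₂ ξ := mul_pos (wFull_pos _ _) (w2_pos _ _)
  rw [← ENNReal.ofReal_inv_of_pos hw,
    ENNReal.ofReal_rpow_of_nonneg (inv_nonneg.2 hw.le) (by norm_num : (0:ℝ) ≤ 2)]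
  apply ENNReal.ofReal_le_ofReal
  set P : ℝ := (1 + ‖ξ.1‖^2) ^ (θ*s₁/2) * (1 + ‖ξ.2‖^2) ^ (((1-θ)*s₁+s₂)/2) with hP
  have hP0 : 0 < P := mul_pos (Real.rpow_pos_of_pos h1pA _) (Real.rpow_pos_of_pos h1pB _)
  have hPw : P ≤ wFull s₁ ξ * w2 s₂ ξ := weight_lower hθ0 hθ1 hs₁ hs₂ ξ
  have hinv : (wFull s₁ ξ * w2 s₂ ξ)⁻¹ ≤ P⁻¹ := by
    exact inv_anti₀ hP0 hPw
  calc ((wFull s₁ ξ * w2 s₂ ξ)⁻¹) ^ (2:ℝ) ≤ (P⁻¹) ^ (2:ℝ) :=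
        Real.rpow_le_rpow (inv_nonneg.2 hw.le) hinv (by norm_num)
    _ = (1+‖ξ.1‖^2)^(-(2*(θ*s₁))/2) * (1+‖ξ.2‖^2)^(-(2*((1-θ)*s₁+s₂))/2) := by
        rw [hP, Real.inv_rpow (mul_nonneg (Real.rpow_nonneg h1pA.le _)
          (Real.rpow_nonneg h1pB.le _)) _,
          Real.mul_rpow (Real.rpow_nonneg h1pA.le _) (Real.rpow_nonneg h1pB.le _),
          ← Real.rpow_mul h1pA.le, ← Real.rpow_mul h1pB.le, mul_inv,
          ← Real.rpow_neg h1pA.le, ← Real.rpow_neg h1pB.le]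
        ring_nf

lemma K_lt_top {a b : ℕ} {θ s₁ s₂ : ℝ} (hθ0 : 0 ≤ θ) (hθ1 : θ ≤ 1) (hs₁ : 0 ≤ s₁)
    (hs₂ : 0 ≤ s₂) (h₁ : (a : ℝ) < 2*(θ*s₁)) (h₂ : (b : ℝ) < 2*((1-θ)*s₁+s₂)) :
    ∫⁻ ξ : Euc a × Euc b, (ENNReal.ofReal (wFull s₁ ξ * w2 s₂ ξ))⁻¹ ^ (2:ℝ) < ⊤ := by
  have ha' : (Module.finrank ℝ (Euc a) : ℝ) < 2*(θ*s₁) := by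
    rwa [finrank_euclideanSpace, Fintype.card_fin]
  have hb' : (Module.finrank ℝ (Euc b) : ℝ) < 2*((1-θ)*s₁+s₂) := by
    rwa [finrank_euclideanSpace, Fintype.card_fin]
  have int1 : Integrable (fun x : Euc a => (1+‖x‖^2)^(-(2*(θ*s₁))/2)) volume :=
    integrable_rpow_neg_one_add_norm_sq ha'
  have int2 : Integrable (fun y : Euc b => (1+‖y‖^2)^(-(2*((1-θ)*s₁+s₂))/2)) volume :=
    integrable_rpow_neg_one_add_norm_sq hb'
  calc ∫⁻ ξ : Euc a × Euc b, (ENNReal.ofReal (wFull s₁ ξ * w2 s₂ ξ))⁻¹ ^ (2:ℝ)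
      ≤ ∫⁻ ξ : Euc a × Euc b, ENNReal.ofReal
          ((1+‖ξ.1‖^2)^(-(2*(θ*s₁))/2) * (1+‖ξ.2‖^2)^(-(2*((1-θ)*s₁+s₂))/2)) :=
        lintegral_mono (weightK_le hθ0 hθ1 hs₁ hs₂)
    _ = (∫⁻ x : Euc a, ENNReal.ofReal ((1+‖x‖^2)^(-(2*(θ*s₁))/2)))
        * ∫⁻ y : Euc b, ENNReal.ofReal ((1+‖y‖^2)^(-(2*((1-θ)*s₁+s₂))/2)) := by
        rw [Measure.volume_eq_prod]
        rw [show (fun ξ : Euc a × Euc b => ENNReal.ofReal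
            ((1+‖ξ.1‖^2)^(-(2*(θ*s₁))/2) * (1+‖ξ.2‖^2)^(-(2*((1-θ)*s₁+s₂))/2)))
          = fun ξ : Euc a × Euc b => ENNReal.ofReal ((1+‖ξ.1‖^2)^(-(2*(θ*s₁))/2))
            * ENNReal.ofReal ((1+‖ξ.2‖^2)^(-(2*((1-θ)*s₁+s₂))/2)) from funext fun ξ => by
          rw [ENNReal.ofReal_mul (Real.rpow_nonneg (by positivity) _)]]
        exact lintegral_prod_mul
          (ENNReal.measurable_ofReal.comp_aemeasurable int1.aestronglyMeasurable.aemeasurable)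
          (ENNReal.measurable_ofReal.comp_aemeasurable int2.aestronglyMeasurable.aemeasurable)
    _ < ⊤ := ENNReal.mul_lt_top int1.lintegral_lt_top int2.lintegral_lt_top

lemma lintegral_VV {a b : ℕ} (g : Euc a × Euc b → ℝ≥0∞) :
    ∫⁻ ξ : VV a b, g (WithLp.ofLp ξ) = ∫⁻ ξ : Euc a × Euc b, g ξ :=
  (volume_VV a b).lintegral_comp_emb (MeasurableEquiv.measurableEmbedding _) g

lemma measurable_FT2' {a b : ℕ} (f : SchwartzMap (Euc a × Euc b) ℂ) :
    Measurable (fun ξ : Euc a × Euc b => FT2 (⇑f) ξ) :=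
  (continuous_FT2 f).measurable.comp (MeasurableEquiv.toLp 2 (Euc a × Euc b)).measurable

lemma continuous_w {a b : ℕ} (s₁ s₂ : ℝ) :
    Continuous (fun ξ : Euc a × Euc b => wFull s₁ ξ * w2 s₂ ξ) := by
  have h1 : Continuous (fun ξ : Euc a × Euc b => 1 + ‖ξ.1‖^2 + ‖ξ.2‖^2) := by fun_prop
  have h2 : Continuous (fun ξ : Euc a × Euc b => 1 + ‖ξ.2‖^2) := by fun_prop
  have hw1 : Continuous (fun ξ : Euc a × Euc b => wFull s₁ ξ) := by
    unfold wFull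
    exact h1.rpow_const (fun x => Or.inl (by positivity))
  have hw2 : Continuous (fun ξ : Euc a × Euc b => w2 s₂ ξ) := by
    unfold w2
    exact h2.rpow_const (fun x => Or.inl (by positivity))
  exact hw1.mul hw2

lemma fnorm2_eq {a b : ℕ} (s₁ s₂ : ℝ) (f : Euc a × Euc b → ℂ) :
    fnorm2 s₁ s₂ f = (∫⁻ ξ : Euc a × Euc b,
      (ENNReal.ofReal (wFull s₁ ξ * w2 s₂ ξ) * (‖FT2 f ξ‖₊ : ℝ≥0∞)) ^ (2:ℝ)) ^ (1/(2:ℝ)) := by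
  rw [fnorm2, eLpNorm_eq_lintegral_rpow_enorm_toReal two_ne_zero ENNReal.ofNat_ne_top]
  rw [show ((2:ℝ≥0∞).toReal) = (2:ℝ) from by norm_num]
  congr 1
  apply lintegral_congr; intro ξ
  congr 1
  rw [enorm_mul]
  congr 1
  rw [← ofReal_norm_eq_enorm, Complex.norm_real,
    Real.norm_of_nonneg (mul_pos (wFull_pos s₁ ξ) (w2_pos s₂ ξ)).le]

lemma lintegral_FT2_le {a b : ℕ} (s₁ s₂ : ℝ) (f : SchwartzMap (Euc a × Euc b) ℂ) :
    ∫⁻ ξ : Euc a × Euc b, (‖FT2 (⇑f) ξ‖₊ : ℝ≥0∞)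
      ≤ (∫⁻ ξ : Euc a × Euc b, (ENNReal.ofReal (wFull s₁ ξ * w2 s₂ ξ))⁻¹ ^ (2:ℝ)) ^ (1/(2:ℝ))
        * fnorm2 s₁ s₂ (⇑f) := by
  set W : Euc a × Euc b → ℝ≥0∞ := fun ξ => ENNReal.ofReal (wFull s₁ ξ * w2 s₂ ξ) with hWdef
  have hWmeas : Measurable W := ENNReal.measurable_ofReal.comp (continuous_w s₁ s₂).measurable
  have hWm : AEMeasurable (fun ξ => (W ξ)⁻¹) volume := hWmeas.inv.aemeasurable
  have hGm : AEMeasurable (fun ξ => W ξ * (‖FT2 (⇑f) ξ‖₊ : ℝ≥0∞)) volume :=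
    (hWmeas.mul (measurable_FT2' f).nnnorm.coe_nnreal_ennreal).aemeasurable
  have hpt : (fun ξ : Euc a × Euc b => (‖FT2 (⇑f) ξ‖₊ : ℝ≥0∞))
      = fun ξ => ((W ξ)⁻¹ * (W ξ * (‖FT2 (⇑f) ξ‖₊ : ℝ≥0∞))) := by
    funext ξ
    have hw0 : W ξ ≠ 0 := by
      simp only [hWdef, ne_eq, ENNReal.ofReal_eq_zero, not_le]
      exact mul_pos (wFull_pos s₁ ξ) (w2_pos s₂ ξ)
    rw [← mul_assoc, ENNReal.inv_mul_cancel hw0 ENNReal.ofReal_ne_top, one_mul]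
  calc ∫⁻ ξ : Euc a × Euc b, (‖FT2 (⇑f) ξ‖₊ : ℝ≥0∞)
      = ∫⁻ ξ : Euc a × Euc b,
          ((fun ξ => (W ξ)⁻¹) * (fun ξ => W ξ * (‖FT2 (⇑f) ξ‖₊ : ℝ≥0∞))) ξ := by
        rw [hpt]; rfl
    _ ≤ (∫⁻ ξ, ((W ξ)⁻¹) ^ (2:ℝ)) ^ (1/(2:ℝ))
          * (∫⁻ ξ, (W ξ * (‖FT2 (⇑f) ξ‖₊ : ℝ≥0∞)) ^ (2:ℝ)) ^ (1/(2:ℝ)) :=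
        ENNReal.lintegral_mul_le_Lp_mul_Lq volume Real.HolderConjugate.two_two hWm hGm
    _ = (∫⁻ ξ : Euc a × Euc b, (ENNReal.ofReal (wFull s₁ ξ * w2 s₂ ξ))⁻¹ ^ (2:ℝ)) ^ (1/(2:ℝ))
          * fnorm2 s₁ s₂ (⇑f) := by
        rw [fnorm2_eq]

end AnisoAux

/-- Dyadic Littlewood–Paley pieces generated by a bump `φ₀`:
`φ_j(x) = φ₁(2^{1-j}x) = φ₀(2^{-j} x) - φ₀(2^{1-j} x)` for `j ≥ 1`, where
`φ₁(x) = φ₀(x/2) - φ₀(x)`. -/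
def lpPiece {a : ℕ} (φ₀ : Euc a → ℝ) : ℕ → Euc a → ℝ
  | 0 => φ₀
  | (j + 1) => fun x => φ₀ ((2 : ℝ) ^ (-(j : ℤ) - 1) • x) - φ₀ ((2 : ℝ) ^ (-(j : ℤ)) • x)

/-- Conditions on the generating bump of a dyadic Littlewood–Paley partition of unity:
smooth, `[0,1]`-valued, `≡ 1` on the unit ball and `≡ 0` outside the ball of radius 2. -/
structure IsLPBase {a : ℕ} (φ₀ : Euc a → ℝ) : Prop where
  smooth : ContDiff ℝ (⊤ : ℕ∞) φ₀
  nonneg : ∀ x, 0 ≤ φ₀ x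
  le_one : ∀ x, φ₀ x ≤ 1
  eq_one : ∀ x, ‖x‖ ≤ 1 → φ₀ x = 1
  eq_zero : ∀ x, 2 ≤ ‖x‖ → φ₀ x = 0

/-- **Anisotropic Sobolev embedding `H^{(s₁,s₂),2}(ℝ^{n₁}×ℝ^{n₂}) ⊆ L^∞`.**
If `s₁ > n₁/2`, `s₂ ≥ 0` and `s₁ + s₂ > (n₁+n₂)/2`, then there is `C > 0` such that for
every Schwartz `f` on `ℝ^{n₁}×ℝ^{n₂}`:
`‖f‖_{L^∞} ≤ C ‖⟨ξ⟩^{s₁} ⟨ξ⁽²⁾⟩^{s₂} 𝓕f‖_{L²}`. -/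
theorem aniso_sobolev_embedding_Linfty
    (n₁ n₂ : ℕ) (hn₁ : 1 ≤ n₁) (hn₂ : 1 ≤ n₂)
    (s₁ s₂ : ℝ) (hs₁ : (n₁ : ℝ) / 2 < s₁) (hs₂ : 0 ≤ s₂)
    (hsum : ((n₁ : ℝ) + (n₂ : ℝ)) / 2 < s₁ + s₂) :
    ∃ C : ℝ, 0 < C ∧
      ∀ f : SchwartzMap (Euc n₁ × Euc n₂) ℂ,
        eLpNorm (⇑f) ⊤ volume ≤ ENNReal.ofReal C * fnorm2 s₁ s₂ (⇑f) := by
  classical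
  open AnisoAux in
  have hn₁' : (1:ℝ) ≤ (n₁:ℝ) := by exact_mod_cast hn₁
  have hn₂' : (1:ℝ) ≤ (n₂:ℝ) := by exact_mod_cast hn₂
  have hs₁pos : 0 < s₁ := by linarith
  have h2s : (0:ℝ) < 2*s₁ := by linarith
  obtain ⟨θ, hθ0, hθ1, hθa, hθb⟩ : ∃ θ:ℝ, 0 ≤ θ ∧ θ ≤ 1 ∧
      (n₁:ℝ) < 2*(θ*s₁) ∧ (n₂:ℝ) < 2*((1-θ)*s₁+s₂) := by
    set p : ℝ := (n₁:ℝ)/(2*s₁) with hpdef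
    set q : ℝ := (2*(s₁+s₂)-(n₂:ℝ))/(2*s₁) with hqdef
    have hp0 : 0 ≤ p := by positivity
    have hp1 : p < 1 := by
      rw [hpdef, div_lt_one h2s]; linarith
    have hpq : p < q := by
      rw [hpdef, hqdef, div_lt_div_iff_of_pos_right h2s]; linarith
    set m : ℝ := min 1 q with hmdef
    have hpm : p < m := lt_min hp1 hpq
    refine ⟨(p+m)/2, by linarith, ?_, ?_, ?_⟩
    · have : m ≤ 1 := min_le_left _ _
      linarith
    · have hθp : p < (p+m)/2 := by linarith
      have hmul : p * (2*s₁) < ((p+m)/2) * (2*s₁) := by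
        exact mul_lt_mul_of_pos_right hθp h2s
      have hpval : p * (2*s₁) = (n₁:ℝ) := by
        rw [hpdef]; field_simp
      nlinarith
    · have hθq : (p+m)/2 < q := lt_of_lt_of_le (by linarith) (min_le_right 1 q)
      have hmul : ((p+m)/2) * (2*s₁) < q * (2*s₁) := mul_lt_mul_of_pos_right hθq h2s
      have hqval : q * (2*s₁) = 2*(s₁+s₂)-(n₂:ℝ) := by
        rw [hqdef]; field_simp
      nlinarith
  set K : ℝ≥0∞ := ∫⁻ ξ : Euc n₁ × Euc n₂,
      (ENNReal.ofReal (wFull s₁ ξ * w2 s₂ ξ))⁻¹ ^ (2:ℝ) with hKdef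
  have hKlt : K < ⊤ := K_lt_top hθ0 hθ1 hs₁pos.le hs₂ hθa hθb
  set c₀ : ℝ := |(((-(2 * Real.pi)) ^ (Module.finrank ℝ (VV n₁ n₂)))⁻¹ : ℝ)| with hc₀
  have hc₀0 : 0 ≤ c₀ := abs_nonneg _
  have hC0 : 0 < c₀ * (K.toReal ^ (1/(2:ℝ))) + 1 := by positivity
  refine ⟨c₀ * (K.toReal ^ (1/(2:ℝ))) + 1, hC0, fun f => ?_⟩
  have hpt : ∀ x : Euc n₁ × Euc n₂, (‖f x‖₊ : ℝ≥0∞)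
      ≤ (ENNReal.ofReal c₀ * K ^ (1/(2:ℝ))) * fnorm2 s₁ s₂ ⇑f := by
    intro x
    calc (‖f x‖₊ : ℝ≥0∞) ≤ ∫⁻ v : VV n₁ n₂, (‖𝓕 (⇑(toV f)) v‖₊ : ℝ≥0∞) :=
          enorm_le_lintegral f x
      _ = ENNReal.ofReal c₀ * ∫⁻ ξ : VV n₁ n₂, (‖FT2 (⇑f) (WithLp.ofLp ξ)‖₊ : ℝ≥0∞) := by
          rw [lintegral_fourier_toV_eq f, ← hc₀]
      _ = ENNReal.ofReal c₀ * ∫⁻ ξ : Euc n₁ × Euc n₂, (‖FT2 (⇑f) ξ‖₊ : ℝ≥0∞) := by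
          congr 1
          exact lintegral_VV (fun ξ => (‖FT2 (⇑f) ξ‖₊ : ℝ≥0∞))
      _ ≤ ENNReal.ofReal c₀ * (K ^ (1/(2:ℝ)) * fnorm2 s₁ s₂ ⇑f) := by
          exact mul_le_mul_right (lintegral_FT2_le s₁ s₂ f) _
      _ = (ENNReal.ofReal c₀ * K ^ (1/(2:ℝ))) * fnorm2 s₁ s₂ ⇑f := by
          rw [mul_assoc]
  have hconst : ENNReal.ofReal c₀ * K ^ (1/(2:ℝ))
      ≤ ENNReal.ofReal (c₀ * (K.toReal ^ (1/(2:ℝ))) + 1) := by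
    have hKr : K ^ (1/(2:ℝ)) = ENNReal.ofReal (K.toReal ^ (1/(2:ℝ))) := by
      conv_lhs => rw [← ENNReal.ofReal_toReal hKlt.ne]
      rw [ENNReal.ofReal_rpow_of_nonneg ENNReal.toReal_nonneg (by norm_num)]
    rw [hKr, ← ENNReal.ofReal_mul hc₀0]
    exact ENNReal.ofReal_le_ofReal (by linarith)
  rw [eLpNorm_exponent_top]
  refine le_trans (essSup_le_of_ae_le _ (Filter.Eventually.of_forall (fun x => hpt x))) ?_
  exact mul_le_mul_left hconst _
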